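/- Let φ : ℝⁿ → ℝ be an even convex function and t ∈ ℝ be such that the sublevel set {x : φ(x) ≤ t} and the minimum level set {x : φ(x) = φ(0)} are both convex bodies. Then there exists c > |φ(0)| such that, defining for r ≥ 0 the set S(r) := {x : φ(x) ≤ t and φ(x) + c ≤ r}, the following holds: for every λ ∈ (0,1) and all r, s ≥ 0 for which S(r) and S(s) are nonempty, {x ∈ ℝⁿ : ⟨x,u⟩ ≤ h_{S(r)}(u)^λ · h_{S(s)}(u)^{1−λ} for every unit vector u} ⊆ S(r^λ s^{1−λ}). -/

import Mathlib

/-!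
Adding a large constant `c`, the sets `S(r)` become the sublevel sets `{φ + c ≤ a}` with
`a = min r (t + c)` in `I = [φ 0 + c, t + c]`, where `φ 0` is the minimum of the even convex `φ`.
Fix a unit vector `u` and let `H a` be the support function of `{φ + c ≤ a}` at `u`. Convexity of
`φ` makes `H` concave on `I`; pushing a maximiser of `⟪u, ·⟫` a distance `k (b - a)` along `u`
shows that `H` grows with slope at least `k > 0`; and `H ≤ R`, the radius of `{φ ≤ t}`. Taking
`c ≥ R / k` therefore makes `H a / a` nondecreasing on `I`.

For concave `H ≥ 0` with `H a / a` nondecreasing, `H r ^ λ * H s ^ (1 - λ)` is at most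
`H (r ^ λ * s ^ (1 - λ))`: write `r ^ λ * s ^ (1 - λ) = μ r + (1 - μ) s`, apply concavity of `H`,
and compare `A ^ λ * B ^ (1 - λ)` with `μ A + (1 - μ) B` through concavity of `x ↦ x ^ λ`, which
applies because `A / B ≤ r / s`. A point whose inner product with every unit vector is bounded by the support
function of a closed convex set lies in that set, by Hahn–Banach.
-/

open MeasureTheory Set Pointwise

noncomputable section

/-- A convex body in `ℝⁿ`: a compact convex set with nonempty interior. -/
def IsConvexBody {n : ℕ} (K : Set (EuclideanSpace ℝ (Fin n))) : Prop :=
  Convex ℝ K ∧ IsCompact K ∧ (interior K).Nonempty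

/-- The support function of a set. -/
def suppFun {n : ℕ} (K : Set (EuclideanSpace ℝ (Fin n)))
    (u : EuclideanSpace ℝ (Fin n)) : ℝ :=
  sSup ((fun y => (inner ℝ u y : ℝ)) '' K)

/-- The logarithmic combination `λ·K +₀ (1-λ)·L`. -/
def logComb {n : ℕ} (lam : ℝ) (K L : Set (EuclideanSpace ℝ (Fin n))) :
    Set (EuclideanSpace ℝ (Fin n)) :=
  {x | ∀ u : EuclideanSpace ℝ (Fin n), ‖u‖ = 1 →
    (inner ℝ x u : ℝ) ≤ suppFun K u ^ lam * suppFun L u ^ (1 - lam)}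

/-- An even log-concave density on `ℝⁿ`. -/
def IsEvenLogConcaveDensity {n : ℕ} (f : EuclideanSpace ℝ (Fin n) → ℝ) : Prop :=
  Integrable f volume ∧ (∀ x, 0 ≤ f x) ∧ (∀ x, f (-x) = f x) ∧
  ∀ x y : EuclideanSpace ℝ (Fin n), ∀ lam : ℝ, lam ∈ Set.Ioo (0:ℝ) 1 →
    f x ^ lam * f y ^ (1 - lam) ≤ f (lam • x + (1 - lam) • y)

lemma rpow_mul_rpow_one_sub_self {x : ℝ} (hx : 0 ≤ x) (lam : ℝ) :
    x ^ lam * x ^ (1 - lam) = x := by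
  rw [← Real.rpow_add' hx (by rw [add_sub_cancel]; exact one_ne_zero), add_sub_cancel,
    Real.rpow_one]

lemma rpow_mul_rpow_one_sub_mem_Icc {r s lam : ℝ} (hr : 0 ≤ r) (hrs : r ≤ s)
    (hlam : lam ∈ Icc (0 : ℝ) 1) : r ^ lam * s ^ (1 - lam) ∈ Icc r s := by
  have hlam' : 0 ≤ 1 - lam := sub_nonneg.2 hlam.2
  constructor
  · calc r = r ^ lam * r ^ (1 - lam) := (rpow_mul_rpow_one_sub_self hr lam).symm
      _ ≤ r ^ lam * s ^ (1 - lam) := by gcongr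
  · calc r ^ lam * s ^ (1 - lam) ≤ s ^ lam * s ^ (1 - lam) :=
          mul_le_mul_of_nonneg_right (Real.rpow_le_rpow hr hrs hlam.1)
            (Real.rpow_nonneg (hr.trans hrs) _)
      _ = s := rpow_mul_rpow_one_sub_self (hr.trans hrs) lam

lemma Convex.rpow_mul_rpow_one_sub_mem {I : Set ℝ} (hI : Convex ℝ I) (hI₀ : ∀ x ∈ I, 0 ≤ x)
    {r s lam : ℝ} (hr : r ∈ I) (hs : s ∈ I) (hlam : lam ∈ Icc (0 : ℝ) 1) :
    r ^ lam * s ^ (1 - lam) ∈ I := by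
  have hsub := hI.ordConnected.out
  rcases le_total r s with hrs | hsr
  · exact hsub hr hs (rpow_mul_rpow_one_sub_mem_Icc (hI₀ r hr) hrs hlam)
  · have hlam' : 1 - lam ∈ Icc (0 : ℝ) 1 := ⟨sub_nonneg.2 hlam.2, sub_le_self _ hlam.1⟩
    have := hsub hs hr (rpow_mul_rpow_one_sub_mem_Icc (hI₀ s hs) hsr hlam')
    rwa [sub_sub_cancel, mul_comm] at this

lemma rpow_mul_rpow_le_of_div_le {a b A B lam μ : ℝ} (hlam : lam ∈ Icc (0 : ℝ) 1)
    (ha : 0 < a) (hab : a < b) (hA : 0 ≤ A) (hB : 0 ≤ B) (hdiv : A / a ≤ B / b)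
    (hμ : μ * a + (1 - μ) * b = a ^ lam * b ^ (1 - lam)) :
    A ^ lam * B ^ (1 - lam) ≤ μ * A + (1 - μ) * B := by
  have hb : 0 < b := ha.trans hab
  rw [div_le_div_iff₀ ha hb] at hdiv
  rcases hB.eq_or_lt with rfl | hB
  · obtain rfl : A = 0 := le_antisymm (by nlinarith) hA
    simp [rpow_mul_rpow_one_sub_self le_rfl]
  set p := a / b
  set q := A / B
  have hq : 0 ≤ q := div_nonneg hA hB.le
  have hqp : q ≤ p := by rw [div_le_div_iff₀ hB hb]; linarith
  have hp1 : p < 1 := (div_lt_one hb).2 hab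
  set θ := (1 - p) / (1 - q)
  have hθ : 0 < θ := div_pos (by linarith) (by linarith)
  have hθq : θ * (1 - q) = 1 - p := div_mul_cancel₀ _ (by linarith)
  have hchord : θ * q ^ lam + (1 - θ) ≤ p ^ lam := by
    have h := (Real.concaveOn_rpow hlam.1 hlam.2).2 (mem_Ici.2 hq) (mem_Ici.2 zero_le_one)
      hθ.le (by nlinarith) (add_sub_cancel _ _)
    have hp : θ * q + (1 - θ) = p := by linear_combination -hθq
    simpa only [smul_eq_mul, Real.one_rpow, mul_one, hp] using h
  have hpμ : p ^ lam = μ * p + (1 - μ) := by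
    have : b * p ^ lam = a ^ lam * b ^ (1 - lam) := by
      rw [Real.div_rpow ha.le hb.le, Real.rpow_sub hb, Real.rpow_one]; ring
    apply mul_left_cancel₀ hb.ne'
    rw [this, ← hμ]
    simp only [p]
    field_simp
  have hqμ : q ^ lam ≤ μ * q + (1 - μ) := by
    refine le_of_mul_le_mul_left ?_ hθ
    linear_combination hchord + hpμ + μ * hθq
  have hBq : B * q = A := by simp only [q]; field_simp
  calc A ^ lam * B ^ (1 - lam) = B * q ^ lam := by
        rw [Real.div_rpow hA hB.le, Real.rpow_sub hB, Real.rpow_one]; field_simp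
    _ ≤ B * (μ * q + (1 - μ)) := by gcongr
    _ = μ * A + (1 - μ) * B := by linear_combination μ * hBq

lemma monotoneOn_div_self_of_add_mul_le {H : ℝ → ℝ} {I : Set ℝ} {k : ℝ}
    (hI₀ : ∀ x ∈ I, 0 < x) (hle : ∀ x ∈ I, H x ≤ k * x)
    (hgrowth : ∀ r ∈ I, ∀ s ∈ I, r ≤ s → H r + k * (s - r) ≤ H s) :
    MonotoneOn (fun x => H x / x) I := by
  intro r hr s hs hrs
  rw [div_le_div_iff₀ (hI₀ r hr) (hI₀ s hs)]
  calc H r * s = H r * r + H r * (s - r) := by ring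
    _ ≤ H r * r + k * r * (s - r) := by gcongr; exact hle r hr
    _ = r * (H r + k * (s - r)) := by ring
    _ ≤ r * H s := by gcongr; exacts [(hI₀ r hr).le, hgrowth r hr s hs hrs]
    _ = H s * r := mul_comm _ _

theorem ConcaveOn.rpow_mul_rpow_le {H : ℝ → ℝ} {I : Set ℝ} (hH : ConcaveOn ℝ I H)
    (hI₀ : ∀ x ∈ I, 0 < x) (hH₀ : ∀ x ∈ I, 0 ≤ H x) (hmono : MonotoneOn (fun x => H x / x) I)
    {r s lam : ℝ} (hr : r ∈ I) (hs : s ∈ I) (hlam : lam ∈ Icc (0 : ℝ) 1) :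
    H r ^ lam * H s ^ (1 - lam) ≤ H (r ^ lam * s ^ (1 - lam)) := by
  wlog hrs : r ≤ s generalizing r s lam
  · have := this hs hr ⟨sub_nonneg.2 hlam.2, sub_le_self _ hlam.1⟩ (le_of_not_ge hrs)
    rwa [sub_sub_cancel, mul_comm, mul_comm (s ^ _)] at this
  rcases hrs.eq_or_lt with rfl | hrs
  · rw [rpow_mul_rpow_one_sub_self (hH₀ r hr), rpow_mul_rpow_one_sub_self (hI₀ r hr).le]
  set ρ := r ^ lam * s ^ (1 - lam)
  have hρ : ρ ∈ Icc r s := rpow_mul_rpow_one_sub_mem_Icc (hI₀ r hr).le hrs.le hlam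
  set μ := (s - ρ) / (s - r)
  have hsr : 0 < s - r := sub_pos.2 hrs
  have hμ : μ * r + (1 - μ) * s = ρ := by simp only [μ]; field_simp; ring
  have hμ₀ : 0 ≤ μ := div_nonneg (sub_nonneg.2 hρ.2) hsr.le
  have hμ₁ : 0 ≤ 1 - μ := by
    rw [sub_nonneg, div_le_one hsr]; linarith [hρ.1]
  calc H r ^ lam * H s ^ (1 - lam) ≤ μ * H r + (1 - μ) * H s :=
        rpow_mul_rpow_le_of_div_le hlam (hI₀ r hr) hrs (hH₀ r hr) (hH₀ s hs)
          (hmono hr hs hrs.le) hμ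
    _ ≤ H (μ * r + (1 - μ) * s) := hH.2 hr hs hμ₀ hμ₁ (add_sub_cancel _ _)
    _ = H ρ := by rw [hμ]

section SupportFunction

variable {n : ℕ} {K : Set (EuclideanSpace ℝ (Fin n))}

lemma IsCompact.inner_le_suppFun (hK : IsCompact K) (u : EuclideanSpace ℝ (Fin n))
    {y : EuclideanSpace ℝ (Fin n)} (hy : y ∈ K) : inner ℝ u y ≤ suppFun K u :=
  le_csSup (hK.image (continuous_const.inner continuous_id)).bddAbove (mem_image_of_mem _ hy)

lemma IsCompact.exists_inner_eq_suppFun (hK : IsCompact K) (hne : K.Nonempty)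
    (u : EuclideanSpace ℝ (Fin n)) : ∃ y ∈ K, inner ℝ u y = suppFun K u := by
  have hcont : Continuous fun y : EuclideanSpace ℝ (Fin n) => inner ℝ u y :=
    continuous_const.inner continuous_id
  obtain ⟨y, hy, hmax⟩ := hK.exists_isMaxOn hne hcont.continuousOn
  exact ⟨y, hy, le_antisymm (hK.inner_le_suppFun u hy)
    (csSup_le (hne.image _) (forall_mem_image.2 fun z hz => hmax hz))⟩

lemma suppFun_le_of_subset_closedBall (hne : K.Nonempty) {R : ℝ}
    (hR : K ⊆ Metric.closedBall 0 R) {u : EuclideanSpace ℝ (Fin n)} (hu : ‖u‖ = 1) :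
    suppFun K u ≤ R :=
  csSup_le (hne.image _) <| forall_mem_image.2 fun y hy => by
    calc inner ℝ u y ≤ ‖u‖ * ‖y‖ := real_inner_le_norm u y
      _ ≤ R := by rw [hu, one_mul]; simpa using hR hy

lemma mem_of_forall_inner_le_suppFun (hconv : Convex ℝ K) (hclosed : IsClosed K)
    (hne : K.Nonempty) {x : EuclideanSpace ℝ (Fin n)}
    (hx : ∀ u : EuclideanSpace ℝ (Fin n), ‖u‖ = 1 → inner ℝ x u ≤ suppFun K u) : x ∈ K := by
  by_contra hxK
  obtain ⟨f, β, hfK, hfx⟩ := geometric_hahn_banach_closed_point hconv hclosed hxK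
  set w := (InnerProductSpace.toDual ℝ (EuclideanSpace ℝ (Fin n))).symm f
  have hw : ∀ v, inner ℝ w v = f v := fun v => InnerProductSpace.toDual_symm_apply
  have hw₀ : w ≠ 0 := by
    rintro hw₀
    obtain ⟨a, ha⟩ := hne
    have := hfK a ha
    rw [← hw, hw₀, inner_zero_left] at this hfx
    linarith
  set u := ‖w‖⁻¹ • w
  have hsupp : suppFun K u ≤ ‖w‖⁻¹ * β :=
    csSup_le (hne.image _) <| forall_mem_image.2 fun z hz => by
      rw [inner_smul_left, RCLike.conj_to_real, hw]
      exact mul_le_mul_of_nonneg_left (hfK z hz).le (by positivity)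
  have hxu : inner ℝ x u = ‖w‖⁻¹ * f x := by
    rw [inner_smul_right, real_inner_comm, hw]
  have := (hx u (norm_smul_inv_norm hw₀)).trans hsupp
  rw [hxu] at this
  exact absurd (le_of_mul_le_mul_left this (by positivity)) (not_le.2 hfx)

end SupportFunction

section Sublevel

variable {n : ℕ} {φ : EuclideanSpace ℝ (Fin n) → ℝ} {T : ℝ}

lemma ConvexOn.apply_zero_le_of_even {E : Type*} [AddCommGroup E] [Module ℝ E] {f : E → ℝ}
    (hf : ConvexOn ℝ univ f) (heven : ∀ x, f (-x) = f x) (x : E) : f 0 ≤ f x := by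
  have h := hf.2 (mem_univ x) (mem_univ (-x)) (by norm_num : (0 : ℝ) ≤ 1 / 2)
    (by norm_num : (0 : ℝ) ≤ 1 / 2) (by norm_num)
  rw [smul_neg, add_neg_cancel, heven, smul_eq_mul] at h
  linarith

lemma isCompact_sublevel (hφ : ConvexOn ℝ univ φ) (hT : IsCompact {x | φ x ≤ T}) {a : ℝ}
    (ha : a ≤ T) : IsCompact {x | φ x ≤ a} :=
  hT.of_isClosed_subset
    (isClosed_le (continuousOn_univ.1 (hφ.continuousOn isOpen_univ)) continuous_const)
    fun _ hx => le_trans hx ha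

lemma concaveOn_suppFun_sublevel (hφ : ConvexOn ℝ univ φ) (hT : IsCompact {x | φ x ≤ T})
    (u : EuclideanSpace ℝ (Fin n)) :
    ConcaveOn ℝ (Icc (φ 0) T) fun a => suppFun {x | φ x ≤ a} u := by
  refine ⟨convex_Icc _ _, fun a ha b hb μ ν hμ hν hμν => ?_⟩
  obtain ⟨y, hy, hyu⟩ := (isCompact_sublevel hφ hT ha.2).exists_inner_eq_suppFun ⟨0, ha.1⟩ u
  obtain ⟨z, hz, hzu⟩ := (isCompact_sublevel hφ hT hb.2).exists_inner_eq_suppFun ⟨0, hb.1⟩ u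
  have hmem : μ • y + ν • z ∈ {x | φ x ≤ μ • a + ν • b} :=
    (hφ.2 (mem_univ y) (mem_univ z) hμ hν hμν).trans
      (by simp only [smul_eq_mul]; gcongr; exacts [hy, hz])
  have hcomb : μ • a + ν • b ≤ T := (convex_Icc _ _ ha hb hμ hν hμν).2
  calc μ • suppFun {x | φ x ≤ a} u + ν • suppFun {x | φ x ≤ b} u
        = inner ℝ u (μ • y + ν • z) := by
        rw [inner_add_right, inner_smul_right, inner_smul_right, hyu, hzu, smul_eq_mul,
          smul_eq_mul]
    _ ≤ _ := (isCompact_sublevel hφ hT hcomb).inner_le_suppFun u hmem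

lemma suppFun_sublevel_add_mul_le (hφ : ConvexOn ℝ univ φ) (hT : IsCompact {x | φ x ≤ T})
    {C k : ℝ} (hC : ∀ y, φ y ≤ T → ∀ v : EuclideanSpace ℝ (Fin n), ‖v‖ = 1 → φ (y + v) ≤ C)
    (hk : 0 ≤ k) (hkC : k * (C - φ 0) ≤ 1) (hkT : k * (T - φ 0) ≤ 1)
    {u : EuclideanSpace ℝ (Fin n)} (hu : ‖u‖ = 1) {a b : ℝ} (ha : φ 0 ≤ a) (hab : a ≤ b)
    (hb : b ≤ T) : suppFun {x | φ x ≤ a} u + k * (b - a) ≤ suppFun {x | φ x ≤ b} u := by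
  obtain ⟨y, hy, hyu⟩ :=
    (isCompact_sublevel hφ hT (hab.trans hb)).exists_inner_eq_suppFun ⟨0, ha⟩ u
  set θ := k * (b - a)
  have hθ₀ : 0 ≤ θ := mul_nonneg hk (sub_nonneg.2 hab)
  have hθ₁ : θ ≤ 1 := (mul_le_mul_of_nonneg_left (by linarith) hk).trans hkT
  have hmem : φ (y + θ • u) ≤ b := calc
    φ (y + θ • u) = φ ((1 - θ) • y + θ • (y + u)) := by congr 1; module
    _ ≤ (1 - θ) * φ y + θ * φ (y + u) :=
        hφ.2 (mem_univ _) (mem_univ _) (sub_nonneg.2 hθ₁) hθ₀ (sub_add_cancel _ _)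
    _ ≤ (1 - θ) * a + θ * C :=
        add_le_add (mul_le_mul_of_nonneg_left hy (sub_nonneg.2 hθ₁))
          (mul_le_mul_of_nonneg_left (hC y (hy.trans (hab.trans hb)) u hu) hθ₀)
    _ ≤ b := by nlinarith [mul_le_mul_of_nonneg_right hkC (sub_nonneg.2 hab)]
  calc suppFun {x | φ x ≤ a} u + θ = inner ℝ u (y + θ • u) := by
        rw [inner_add_right, inner_smul_right, real_inner_self_eq_norm_sq, hu, hyu]; ring
    _ ≤ suppFun {x | φ x ≤ b} u := (isCompact_sublevel hφ hT hb).inner_le_suppFun u hmem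

lemma suppFun_sublevel_rpow_mul_rpow_le (hφ : ConvexOn ℝ univ φ)
    (hT : IsCompact {x | φ x ≤ T}) {C R k : ℝ}
    (hC : ∀ y, φ y ≤ T → ∀ v : EuclideanSpace ℝ (Fin n), ‖v‖ = 1 → φ (y + v) ≤ C)
    (hR : {x | φ x ≤ T} ⊆ Metric.closedBall 0 R) (hk : 0 ≤ k) (hkC : k * (C - φ 0) ≤ 1)
    (hkT : k * (T - φ 0) ≤ 1) (hRk : R ≤ k * φ 0) (h₀ : 0 < φ 0)
    {u : EuclideanSpace ℝ (Fin n)} (hu : ‖u‖ = 1) {a b lam : ℝ} (ha : a ∈ Icc (φ 0) T)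
    (hb : b ∈ Icc (φ 0) T) (hlam : lam ∈ Icc (0 : ℝ) 1) :
    suppFun {x | φ x ≤ a} u ^ lam * suppFun {x | φ x ≤ b} u ^ (1 - lam) ≤
      suppFun {x | φ x ≤ a ^ lam * b ^ (1 - lam)} u := by
  have hI₀ : ∀ x ∈ Icc (φ 0) T, 0 < x := fun x hx => h₀.trans_le hx.1
  have hnonneg : ∀ x ∈ Icc (φ 0) T, 0 ≤ suppFun {y | φ y ≤ x} u := fun x hx => by
    simpa using (isCompact_sublevel hφ hT hx.2).inner_le_suppFun u (show φ 0 ≤ x from hx.1)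
  have hle : ∀ x ∈ Icc (φ 0) T, suppFun {y | φ y ≤ x} u ≤ k * x := fun x hx =>
    calc suppFun {y | φ y ≤ x} u ≤ R :=
          suppFun_le_of_subset_closedBall ⟨0, hx.1⟩ (fun y hy => hR (le_trans hy hx.2)) hu
      _ ≤ k * φ 0 := hRk
      _ ≤ k * x := mul_le_mul_of_nonneg_left hx.1 hk
  refine (concaveOn_suppFun_sublevel hφ hT u).rpow_mul_rpow_le hI₀ hnonneg ?_ ha hb hlam
  exact monotoneOn_div_self_of_add_mul_le hI₀ hle fun r hr s hs hrs =>
    suppFun_sublevel_add_mul_le hφ hT hC hk hkC hkT hu hr.1 hrs hs.2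

lemma logComb_sublevel_subset (hφ : ConvexOn ℝ univ φ) (hT : IsCompact {x | φ x ≤ T})
    {C R k : ℝ} (hC : ∀ y, φ y ≤ T → ∀ v : EuclideanSpace ℝ (Fin n), ‖v‖ = 1 → φ (y + v) ≤ C)
    (hR : {x | φ x ≤ T} ⊆ Metric.closedBall 0 R) (hk : 0 ≤ k) (hkC : k * (C - φ 0) ≤ 1)
    (hkT : k * (T - φ 0) ≤ 1) (hRk : R ≤ k * φ 0) (h₀ : 0 < φ 0) {a b lam : ℝ}
    (ha : a ∈ Icc (φ 0) T) (hb : b ∈ Icc (φ 0) T) (hlam : lam ∈ Icc (0 : ℝ) 1) :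
    logComb lam {x | φ x ≤ a} {x | φ x ≤ b} ⊆ {x | φ x ≤ a ^ lam * b ^ (1 - lam)} := by
  intro x hx
  have hρ : a ^ lam * b ^ (1 - lam) ∈ Icc (φ 0) T :=
    (convex_Icc _ _).rpow_mul_rpow_one_sub_mem (fun x hx => (h₀.trans_le hx.1).le) ha hb hlam
  refine mem_of_forall_inner_le_suppFun (by simpa using hφ.convex_le _)
    (isCompact_sublevel hφ hT hρ.2).isClosed ⟨0, hρ.1⟩ fun u hu => (hx u hu).trans ?_
  exact suppFun_sublevel_rpow_mul_rpow_le hφ hT hC hR hk hkC hkT hRk h₀ hu ha hb hlam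

lemma exists_logComb_sublevel_add_subset (hφ : ConvexOn ℝ univ φ)
    (hT : IsCompact {x | φ x ≤ T}) (h₀T : φ 0 ≤ T) :
    ∃ c > |φ 0|, ∀ lam ∈ Icc (0 : ℝ) 1,
      ∀ a ∈ Icc (φ 0 + c) (T + c), ∀ b ∈ Icc (φ 0 + c) (T + c),
        logComb lam {x | φ x + c ≤ a} {x | φ x + c ≤ b} ⊆
          {x | φ x + c ≤ a ^ lam * b ^ (1 - lam)} := by
  obtain ⟨C, hC⟩ := (hT.add (isCompact_closedBall 0 1)).bddAbove_image
    ((hφ.continuousOn isOpen_univ).mono (subset_univ _))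
  obtain ⟨R, hR⟩ := hT.isBounded.subset_closedBall 0
  have hR₀ : 0 ≤ R := by simpa using hR (show φ 0 ≤ T from h₀T)
  set L := max (C - φ 0) (T - φ 0) + 1
  have hCL : C - φ 0 ≤ L := (le_max_left _ _).trans (le_add_of_nonneg_right zero_le_one)
  have hTL : T - φ 0 ≤ L := (le_max_right _ _).trans (le_add_of_nonneg_right zero_le_one)
  have hL : 0 < L := by linarith [le_max_right (C - φ 0) (T - φ 0)]
  set c := |φ 0| + R * L + 1
  have hφc : R * L < φ 0 + c := by linarith [neg_abs_le (φ 0)]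
  refine ⟨c, by nlinarith, fun lam hlam a ha b hb => ?_⟩
  have hsub : ∀ a, {x | φ x + c ≤ a + c} = {x | φ x ≤ a} := fun a => by
    simp only [add_le_add_iff_right]
  refine logComb_sublevel_subset (φ := fun x => φ x + c) (T := T + c) (C := C + c) (R := R)
    (k := L⁻¹) (hφ.add_const c) (by rwa [hsub]) (fun y hy v hv => ?_) (by rwa [hsub])
    (inv_nonneg.2 hL.le) ?_ ?_ ?_ ((mul_nonneg hR₀ hL.le).trans_lt hφc) ha hb hlam
  · have hy : φ y ≤ T := le_of_add_le_add_right hy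
    exact add_le_add_left
      (hC ⟨y + v, Set.add_mem_add hy (mem_closedBall_zero_iff.2 hv.le), rfl⟩) c
  · rw [add_sub_add_right_eq_sub]; exact inv_mul_le_one_of_le₀ hCL hL.le
  · rw [add_sub_add_right_eq_sub]; exact inv_mul_le_one_of_le₀ hTL hL.le
  · calc R = L⁻¹ * (R * L) := by field_simp
      _ ≤ L⁻¹ * (φ 0 + c) := by gcongr

end Sublevel

theorem sublevel_logComb_inclusion_general (n : ℕ)
    (φ : EuclideanSpace ℝ (Fin n) → ℝ)
    (heven : ∀ x, φ (-x) = φ x) (hconv : ConvexOn ℝ Set.univ φ) (t : ℝ)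
    (h1 : IsConvexBody {x | φ x ≤ t}) :
    ∃ c > |φ 0|, ∀ lam : ℝ, lam ∈ Set.Ioo (0:ℝ) 1 → ∀ r s : ℝ, 0 ≤ r → 0 ≤ s →
      ({x | φ x ≤ t ∧ φ x + c ≤ r}).Nonempty →
      ({x | φ x ≤ t ∧ φ x + c ≤ s}).Nonempty →
      logComb lam {x | φ x ≤ t ∧ φ x + c ≤ r} {x | φ x ≤ t ∧ φ x + c ≤ s}
        ⊆ {x | φ x ≤ t ∧ φ x + c ≤ r ^ lam * s ^ (1 - lam)} := by
  have hmin := hconv.apply_zero_le_of_even heven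
  obtain ⟨y₀, hy₀⟩ := h1.2.2.mono interior_subset
  obtain ⟨c, hc, hsub⟩ := exists_logComb_sublevel_add_subset hconv h1.2.1 ((hmin y₀).trans hy₀)
  refine ⟨c, hc, fun lam hlam r s hr hs hSr hSs x hx => ?_⟩
  have hS : ∀ r, {x | φ x ≤ t ∧ φ x + c ≤ r} = {x | φ x + c ≤ min r (t + c)} := fun r => by
    ext x; simp only [mem_ofPred_eq, le_min_iff, add_le_add_iff_right, and_comm]
  have hI : ∀ r, {x | φ x ≤ t ∧ φ x + c ≤ r}.Nonempty →
      min r (t + c) ∈ Icc (φ 0 + c) (t + c) := fun r ⟨y, hyt, hyr⟩ =>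
    ⟨le_min (by linarith [hmin y]) (by linarith [hmin y]), min_le_right _ _⟩
  have hI₀ : ∀ a ∈ Icc (φ 0 + c) (t + c), 0 ≤ a := fun a ha => by
    linarith [ha.1, neg_abs_le (φ 0)]
  have hlam' : lam ∈ Icc (0 : ℝ) 1 := Ioo_subset_Icc_self hlam
  have hρ := (convex_Icc _ _).rpow_mul_rpow_one_sub_mem hI₀ (hI r hSr) (hI s hSs) hlam'
  rw [hS, hS] at hx
  have hx' := hsub lam hlam' _ (hI r hSr) _ (hI s hSs) hx
  refine ⟨by linarith [hx'.trans hρ.2], hx'.trans ?_⟩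
  exact mul_le_mul (Real.rpow_le_rpow (hI₀ _ (hI r hSr)) (min_le_left _ _) hlam'.1)
    (Real.rpow_le_rpow (hI₀ _ (hI s hSs)) (min_le_left _ _) (sub_nonneg.2 hlam'.2))
    (Real.rpow_nonneg (hI₀ _ (hI s hSs)) _) (Real.rpow_nonneg hr _)

/-- Lemma 3.2: after adding a suitable constant `c` and truncating at level `t`,
the sublevel sets of an even convex function behave well with respect to the
logarithmic combination. -/
theorem sublevel_logComb_inclusion (n : ℕ)
    (φ : EuclideanSpace ℝ (Fin n) → ℝ)
    (heven : ∀ x, φ (-x) = φ x) (hconv : ConvexOn ℝ Set.univ φ) (t : ℝ)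
    (h1 : IsConvexBody {x | φ x ≤ t}) (h2 : IsConvexBody {x | φ x = φ 0}) :
    ∃ c > |φ 0|, ∀ lam : ℝ, lam ∈ Set.Ioo (0:ℝ) 1 → ∀ r s : ℝ, 0 ≤ r → 0 ≤ s →
      ({x | φ x ≤ t ∧ φ x + c ≤ r}).Nonempty →
      ({x | φ x ≤ t ∧ φ x + c ≤ s}).Nonempty →
      logComb lam {x | φ x ≤ t ∧ φ x + c ≤ r} {x | φ x ≤ t ∧ φ x + c ≤ s}
        ⊆ {x | φ x ≤ t ∧ φ x + c ≤ r ^ lam * s ^ (1 - lam)} :=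
  sublevel_logComb_inclusion_general n φ heven hconv t h1
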